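/- arXiv:2106.00229 — 7 statements merged into one kernel-verified Lean document; each statement's English description precedes it below -/
import Mathlib

section
/- If 𝒰 is a nonprincipal ultrafilter on ℕ such that every bounded real sequence is Cauchy when restricted to some set in 𝒰, then 𝒰 is a P-point: for every decreasing sequence X₁ ⊇ X₂ ⊇ ⋯ of sets in 𝒰 there is Y ∈ 𝒰 such that Y \ Xₙ is finite for all n. -/
open Filter

/-- `f` is Cauchy when restricted to the set `Y` of indices. -/
def CauchyOn (f : ℕ → ℝ) (Y : Set ℕ) : Prop :=
  ∀ ε : ℝ, 0 < ε → ∃ N : ℕ, ∀ i ∈ Y, ∀ j ∈ Y, N ≤ i → N ≤ j → |f i - f j| < ε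

/-- If every bounded real sequence is Cauchy when restricted to some set in `𝒰`,
then `𝒰` is a P-point (chain form): every decreasing chain of sets in `𝒰` admits a
pseudo-intersection in `𝒰`. -/
theorem ppoint_of_bounded_cauchy_on_dominant (U : Ultrafilter ℕ)
    (hU : ∀ i : ℕ, U ≠ pure i)
    (hC : ∀ f : ℕ → ℝ, (∃ r : ℝ, ∀ i, |f i| ≤ r) → ∃ Y ∈ U, CauchyOn f Y) :
    ∀ X : ℕ → Set ℕ, (∀ n, X n ∈ U) → (∀ n, X (n + 1) ⊆ X n) →
      ∃ Y ∈ U, ∀ n, (Y \ X n).Finite := by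
  intro X hXU hXmono
  classical
  have hanti : Antitone X := antitone_nat_of_succ_le hXmono
  set f : ℕ → ℝ := fun i =>
    if h : ∃ n, i ∉ X n then (1/2 : ℝ) ^ (sInf {n | i ∉ X n}) else 0 with hfdef
  -- lower bound when i ∉ X n
  have hlow : ∀ i n, i ∉ X n → (1/2 : ℝ) ^ n ≤ f i := by
    intro i n hin
    have h : ∃ m, i ∉ X m := ⟨n, hin⟩
    have hm : sInf {m | i ∉ X m} ≤ n := Nat.sInf_le hin
    simp only [hfdef, dif_pos h]
    exact pow_le_pow_of_le_one (by norm_num) (by norm_num) hm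
  -- upper bound when i ∈ X n
  have hhigh : ∀ i n, i ∈ X n → f i ≤ (1/2 : ℝ) ^ n := by
    intro i n hin
    simp only [hfdef]
    split_ifs with h
    · apply pow_le_pow_of_le_one (by norm_num) (by norm_num)
      by_contra hlt
      push_neg at hlt
      exact (Nat.sInf_mem h) (hanti hlt.le hin)
    · positivity
  have hbound : ∃ r : ℝ, ∀ i, |f i| ≤ r := by
    refine ⟨1, fun i => ?_⟩
    rw [abs_of_nonneg]
    · simp only [hfdef]
      split_ifs with h
      · exact pow_le_one₀ (by norm_num) (by norm_num)
      · norm_num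
    · simp only [hfdef]
      split_ifs with h
      · positivity
      · exact le_refl 0
  obtain ⟨Y, hYU, hYC⟩ := hC f hbound
  refine ⟨Y, hYU, fun n => ?_⟩
  obtain ⟨N, hN⟩ := hYC ((1/2 : ℝ) ^ (n + 1)) (by positivity)
  apply Set.Finite.subset (Set.finite_Iio N)
  intro i hi
  by_contra hiN
  simp only [Set.mem_Iio, not_lt] at hiN
  -- Y ∩ X (n+1) is infinite
  have hmemU : Y ∩ X (n + 1) ∈ U := inter_mem hYU (hXU (n + 1))
  have hinf : (Y ∩ X (n + 1)).Infinite := by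
    intro hfin
    obtain ⟨a, _, ha⟩ := U.eq_pure_of_finite_mem hfin hmemU
    exact hU a ha
  obtain ⟨j, hj, hjN⟩ := hinf.exists_gt N
  have h1 := hN i hi.1 j hj.1 hiN hjN.le
  have h2 : (1/2 : ℝ) ^ n ≤ f i := hlow i n hi.2
  have h3 : f j ≤ (1/2 : ℝ) ^ (n + 1) := hhigh j (n + 1) hj.2
  have h4 : |f i - f j| < (1/2 : ℝ) ^ (n + 1) := h1
  have : (1/2 : ℝ) ^ n < (1/2 : ℝ) ^ (n + 1) + (1/2 : ℝ) ^ (n + 1) := by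
    calc (1/2 : ℝ) ^ n ≤ f i := h2
      _ < f j + (1/2 : ℝ) ^ (n + 1) := by
          have := abs_sub_lt_iff.mp h4
          linarith [this.1]
      _ ≤ (1/2 : ℝ) ^ (n + 1) + (1/2 : ℝ) ^ (n + 1) := by linarith
  rw [pow_succ] at this
  linarith
end

section
/- If 𝒰 is a P-point ultrafilter on ℕ, then for every bounded sequence f : ℕ → ℝ there exists Y ∈ 𝒰 such that the restriction of f to Y converges (along Y) to some real number; in particular f agrees on a set of 𝒰 with a Cauchy sequence. -/
open Filter
open Topology

/-- A nonprincipal ultrafilter `𝒰` is a P-point if for every partition of `ℕ` into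
`𝒰`-negligible sets there is a set in `𝒰` meeting each piece in a finite set. -/
def IsPPoint (U : Ultrafilter ℕ) : Prop :=
  ∀ c : ℕ → Set ℕ, Pairwise (Function.onFun Disjoint c) → (⋃ n, c n) = Set.univ →
    (∀ n, c n ∉ U) → ∃ A ∈ U, ∀ n, (A ∩ c n).Finite

/-- If `𝒰` is a P-point, every bounded sequence converges along some set in `𝒰`;
in particular it agrees on a set of `𝒰` with a Cauchy sequence. -/
theorem bounded_converges_along_ppoint (U : Ultrafilter ℕ)
    (hU : ∀ i : ℕ, U ≠ pure i) (hP : IsPPoint U) :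
    ∀ f : ℕ → ℝ, (∃ r : ℝ, ∀ i, |f i| ≤ r) →
      (∃ Y ∈ U, ∃ L : ℝ, ∀ ε : ℝ, 0 < ε → {i ∈ Y | ε ≤ |f i - L|}.Finite) ∧
      (∃ g : ℕ → ℝ, CauchySeq g ∧ {i : ℕ | f i = g i} ∈ U) := by
  classical
  rintro f ⟨r, hr⟩
  -- the limit along the ultrafilter exists by compactness
  obtain ⟨L, -, hL⟩ := (isCompact_Icc (a := -r) (b := r)).ultrafilter_le_nhds (U.map f)
    (by
      refine Filter.le_principal_iff.mpr ?_
      show f ⁻¹' (Set.Icc (-r) r) ∈ U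
      have : f ⁻¹' (Set.Icc (-r) r) = Set.univ := by
        ext i
        simp [Set.mem_Icc, (abs_le.mp (hr i)).1, (abs_le.mp (hr i)).2]
      rw [this]; exact Filter.univ_mem)
  have hL' : Tendsto f (U : Filter ℕ) (𝓝 L) := by
    rw [Tendsto, ← Ultrafilter.coe_map]; exact hL
  set d : ℕ → ℝ := fun i => |f i - L| with hd
  have key : ∀ ε : ℝ, 0 < ε → {i | d i < ε} ∈ U := by
    intro ε hε
    have h : f ⁻¹' Metric.ball L ε ∈ U := hL' (Metric.ball_mem_nhds L hε)
    have heq : f ⁻¹' Metric.ball L ε = {i | d i < ε} := by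
      ext i; simp [Metric.mem_ball, Real.dist_eq, hd]
    rwa [heq] at h
  -- main claim: there is Y ∈ U on which f converges to L
  have main : ∃ Y ∈ U, ∀ ε : ℝ, 0 < ε → {i ∈ Y | ε ≤ d i}.Finite := by
    by_cases hZ : {i | f i = L} ∈ U
    · refine ⟨{i | f i = L}, hZ, fun ε hε => Set.Finite.subset Set.finite_empty ?_⟩
      rintro i ⟨hi1, hi2⟩
      simp only [Set.mem_setOf_eq] at hi1
      have : d i = 0 := by simp [hd, hi1]
      linarith
    · -- every point with d i > 0 lands in some annulus
      have hex : ∀ i, 0 < d i → ∃ n : ℕ, 1 / ((n : ℝ) + 2) ≤ d i := by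
        intro i hdi
        obtain ⟨n, hn⟩ := exists_nat_one_div_lt hdi
        refine ⟨n, le_of_lt (lt_of_le_of_lt ?_ hn)⟩
        apply one_div_le_one_div_of_le (by positivity)
        linarith
      have hdpos : ∀ i, ¬(d i = 0 ∨ 1 ≤ d i) → 0 < d i := by
        intro i h
        rcases lt_or_eq_of_le (abs_nonneg (f i - L)) with h' | h'
        · exact h'
        · exact absurd (Or.inl h'.symm) h
      let idx : ℕ → ℕ := fun i =>
        if h : d i = 0 ∨ 1 ≤ d i then 0
        else Nat.find (hex i (hdpos i h)) + 1
      have hidx0 : ∀ i, idx i = 0 → d i = 0 ∨ 1 ≤ d i := by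
        intro i hi
        by_contra h
        simp only [idx, dif_neg h] at hi
        exact Nat.succ_ne_zero _ hi
      have hidx1 : ∀ i n, idx i = n + 1 →
          1 / ((n:ℝ) + 2) ≤ d i ∧ d i < 1 / ((n:ℝ) + 1) := by
        intro i n hi
        have h : ¬(d i = 0 ∨ 1 ≤ d i) := by
          intro h
          simp [idx, dif_pos h] at hi
        simp only [idx, dif_neg h] at hi
        have hn : Nat.find (hex i (hdpos i h)) = n := Nat.succ_injective hi
        constructor
        · have := Nat.find_spec (hex i (hdpos i h)); rwa [hn] at this
        · rcases Nat.eq_zero_or_pos n with h0 | hpos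
          · subst h0
            push_neg at h
            have := h.2
            norm_num
            linarith
          · have hmin := Nat.find_min (hex i (hdpos i h)) (m := n - 1) (by omega)
            push_neg at hmin
            have hc : ((n - 1 : ℕ) : ℝ) + 2 = (n : ℝ) + 1 := by
              have h1 : (1:ℕ) ≤ n := hpos
              push_cast [Nat.cast_sub h1]
              ring
            rwa [hc] at hmin
      set c : ℕ → Set ℕ := fun n => {i | idx i = n} with hc
      have hdisj : Pairwise (Function.onFun Disjoint c) := by
        intro n m hnm
        simp only [Function.onFun, Set.disjoint_left, hc, Set.mem_setOf_eq]
        intro i h1 h2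
        exact hnm (h1 ▸ h2 ▸ rfl)
      have hcover : (⋃ n, c n) = Set.univ := by
        ext i; simp only [Set.mem_iUnion, Set.mem_univ, iff_true, hc, Set.mem_setOf_eq]
        exact ⟨idx i, rfl⟩
      -- each piece is negligible
      have hneg : ∀ n, c n ∉ U := by
        intro n
        match n with
        | 0 =>
          have hsub : c 0 ⊆ {i | f i = L} ∪ {i | 1 ≤ d i} := by
            intro i hi
            rcases hidx0 i hi with h | h
            · left
              have := abs_eq_zero.mp h
              simp only [Set.mem_setOf_eq]
              linarith
            · right; exact h
          intro hmem
          rcases Ultrafilter.union_mem_iff.mp (U.sets_of_superset hmem hsub) with h | h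
          · exact hZ h
          · have hcompl : {i | d i < 1} ∈ U := key 1 one_pos
            obtain ⟨i, hi1, hi2⟩ := U.nonempty_of_mem (Filter.inter_mem h hcompl)
            simp only [Set.mem_setOf_eq] at hi1 hi2
            linarith
        | n + 1 =>
          have hsub : c (n + 1) ⊆ {i | 1 / ((n:ℝ) + 2) ≤ d i} :=
            fun i hi => (hidx1 i n hi).1
          intro hmem
          have hε : (0:ℝ) < 1 / ((n:ℝ) + 2) := by positivity
          have hcompl : {i | d i < 1 / ((n:ℝ) + 2)} ∈ U := key _ hε
          obtain ⟨i, hi1, hi2⟩ := U.nonempty_of_mem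
            (Filter.inter_mem (U.sets_of_superset hmem hsub) hcompl)
          simp only [Set.mem_setOf_eq] at hi1 hi2
          linarith
      obtain ⟨A, hA, hAfin⟩ := hP c hdisj hcover hneg
      refine ⟨A, hA, fun ε hε => ?_⟩
      obtain ⟨N, hN⟩ := exists_nat_one_div_lt hε
      refine Set.Finite.subset (Set.Finite.biUnion (Set.finite_Iic (N + 1))
        (fun n _ => hAfin n)) ?_
      rintro i ⟨hiA, hiε⟩
      refine Set.mem_biUnion (?_ : idx i ∈ Set.Iic (N + 1)) ⟨hiA, rfl⟩
      simp only [Set.mem_Iic]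
      by_contra hgt
      push_neg at hgt
      obtain ⟨m, hm⟩ : ∃ m, idx i = m + 1 := by
        cases h : idx i with
        | zero => omega
        | succ m => exact ⟨m, rfl⟩
      have hmN : N + 1 ≤ m := by omega
      have hlt : d i < 1 / ((m:ℝ) + 1) := (hidx1 i m hm).2
      have h1 : 1 / ((m:ℝ) + 1) ≤ 1 / ((N:ℝ) + 1) := by
        apply one_div_le_one_div_of_le (by positivity)
        have : ((N:ℝ) + 1) ≤ (m : ℝ) := by exact_mod_cast hmN
        linarith
      linarith
  obtain ⟨Y, hY, hYfin⟩ := main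
  constructor
  · exact ⟨Y, hY, L, hYfin⟩
  · refine ⟨fun i => if i ∈ Y then f i else L, ?_, ?_⟩
    · have htend : Tendsto (fun i => if i ∈ Y then f i else L) atTop (𝓝 L) := by
        rw [← Nat.cofinite_eq_atTop, Metric.tendsto_nhds]
        intro ε hε
        rw [Filter.eventually_cofinite]
        apply Set.Finite.subset (hYfin ε hε)
        intro i hi
        simp only [Set.mem_setOf_eq, not_lt] at hi
        by_cases h : i ∈ Y
        · refine ⟨h, ?_⟩
          simpa [h, Real.dist_eq] using hi
        · exfalso
          simp only [h, if_false, Real.dist_eq, sub_self, abs_zero] at hi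
          linarith
      exact htend.cauchySeq
    · exact U.sets_of_superset hY (fun i hi => by simp [hi])
end

section
/- 𝒰 is a P-point ultrafilter on ℕ if and only if the natural embedding of D (Cauchy sequences modulo 𝒰-equivalence) into the ultrapower ℝ^ℕ/𝒰 is a ring isomorphism onto the subring of finite hyperreals, with the limit map sh on D corresponding to the standard part. -/
open Filter

/-- `D`: the ring of Cauchy (= convergent) real sequences modulo `𝒰`-equivalence
(`u ~ v` iff `{i | u i = v i} ∈ 𝒰`), realized as a subring of the ultrapower
`ℝ^ℕ/𝒰` (two sequences are `𝒰`-equivalent iff they have the same germ). -/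
noncomputable def D (U : Ultrafilter ℕ) : Subring ((U : Filter ℕ).Germ ℝ) where
  carrier := {x | ∃ f : ℕ → ℝ, CauchySeq f ∧ x = (f : (U : Filter ℕ).Germ ℝ)}
  zero_mem' := ⟨fun _ => 0, cauchySeq_const 0, rfl⟩
  one_mem' := ⟨fun _ => 1, cauchySeq_const 1, rfl⟩
  add_mem' := by
    rintro x y ⟨f, hf, rfl⟩ ⟨g, hg, rfl⟩
    exact ⟨f + g, hf.add hg, rfl⟩
  neg_mem' := by
    rintro x ⟨f, hf, rfl⟩
    exact ⟨-f, hf.neg, rfl⟩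
  mul_mem' := by
    rintro x y ⟨f, hf, rfl⟩ ⟨g, hg, rfl⟩
    obtain ⟨a, ha⟩ := cauchySeq_tendsto_of_complete hf
    obtain ⟨b, hb⟩ := cauchySeq_tendsto_of_complete hg
    exact ⟨f * g, (ha.mul hb).cauchySeq, rfl⟩

open Topology

/-! A finite hyperreal `[g]` always has a standard part `L`, namely the `𝒰`-limit of `g`, and `[g]`
lies in `D` iff `g` agrees `𝒰`-almost everywhere with a sequence converging to `L`. So the theorem
says that this holds for every `𝒰`-convergent `g` iff `𝒰` is a P-point. Given such a `g` that
differs from `L` almost everywhere, the index `ν i = ⌊|g i - L|⁻¹⌋₊` tends to infinity along `𝒰`;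
the P-point property provides `A ∈ 𝒰` on which `ν` is finite-to-one, and `g` restricted to `A` (and
equal to `L` off `A`) converges to `L`. Conversely, for `ν → ∞` along `𝒰` the sequence
`(ν i + 1)⁻¹` tends to `0` along `𝒰`, and a convergent sequence agreeing with it on `A ∈ 𝒰` takes
each value `(n + 1)⁻¹` only finitely often, so `ν` is finite-to-one on `A`. -/

theorem Ultrafilter.le_atTop_of_forall_ne_pure {U : Ultrafilter ℕ} (hU : ∀ i, U ≠ pure i) :
    (U : Filter ℕ) ≤ atTop := by
  rw [← Nat.cofinite_eq_atTop]
  exact U.le_cofinite_or_eq_pure.resolve_right fun ⟨i, hi⟩ => hU i hi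

theorem Ultrafilter.tendsto_atTop_iff_forall_fiber_notMem {α : Type*} (U : Ultrafilter α)
    (ν : α → ℕ) : Tendsto ν U atTop ↔ ∀ n, ν ⁻¹' {n} ∉ U := by
  constructor
  · intro hν n hn
    obtain ⟨i, hlt, hi⟩ := ((hν.eventually_gt_atTop n).and hn).exists
    exact hlt.ne' hi
  · intro hfiber
    refine tendsto_atTop.2 fun N => ?_
    have hlow : {i | ν i < N} ∉ U := by
      have : {i | ν i < N} = ⋃ n ∈ Set.Iio N, ν ⁻¹' {n} := by ext; simp
      rw [this, U.finite_biUnion_mem_iff (Set.finite_Iio N)]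
      exact fun ⟨n, _, hn⟩ => hfiber n hn
    filter_upwards [U.compl_mem_iff_notMem.2 hlow] with i hi using not_lt.1 hi

theorem isPPoint_iff_finite_fibers (U : Ultrafilter ℕ) :
    IsPPoint U ↔ ∀ ν : ℕ → ℕ, Tendsto ν U atTop → ∃ A ∈ U, ∀ n, (A ∩ ν ⁻¹' Set.Iic n).Finite := by
  constructor
  · intro hP ν hν
    obtain ⟨A, hA, hfin⟩ := hP (fun n => ν ⁻¹' {n}) (pairwise_disjoint_fiber ν) (by ext; simp)
      ((U.tendsto_atTop_iff_forall_fiber_notMem ν).1 hν)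
    refine ⟨A, hA, fun n => ?_⟩
    have : A ∩ ν ⁻¹' Set.Iic n = ⋃ k ∈ Set.Iic n, A ∩ ν ⁻¹' {k} := by ext; simp
    rw [this]
    exact (Set.finite_Iic n).biUnion fun k _ => hfin k
  · intro hfib c hdisj hcover hnotU
    choose ν hν using fun i => Set.mem_iUnion.1 (hcover.symm ▸ Set.mem_univ i : i ∈ ⋃ n, c n)
    have hν_eq : ∀ {i n}, i ∈ c n → ν i = n := fun {i} _ hi =>
      hdisj.eq (Set.not_disjoint_iff.2 ⟨i, hν i, hi⟩)
    have hfiber : ∀ n, ν ⁻¹' {n} ⊆ c n := fun n i hi => (hi : ν i = n) ▸ hν i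
    obtain ⟨A, hA, hfin⟩ := hfib ν ((U.tendsto_atTop_iff_forall_fiber_notMem ν).2
      fun n hn => hnotU n (U.mem_of_superset hn (hfiber n)))
    exact ⟨A, hA, fun n => (hfin n).subset fun i ⟨hiA, hi⟩ => ⟨hiA, (hν_eq hi).le⟩⟩

theorem IsPPoint.exists_tendsto_eventuallyEq {U : Ultrafilter ℕ} (hP : IsPPoint U) {g : ℕ → ℝ}
    {L : ℝ} (hg : Tendsto g U (𝓝 L)) :
    ∃ h : ℕ → ℝ, Tendsto h atTop (𝓝 L) ∧ g =ᶠ[U] h := by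
  classical
  by_cases hL : ∀ᶠ i in U, g i = L
  · exact ⟨fun _ => L, tendsto_const_nhds, hL⟩
  have hdist : Tendsto (fun i => |g i - L|) U (𝓝[>] 0) :=
    tendsto_nhdsWithin_iff.2 ⟨by simpa using (hg.sub_const L).abs,
      (Ultrafilter.eventually_not.2 hL).mono fun i hi => abs_pos.2 (sub_ne_zero.2 hi)⟩
  set ν : ℕ → ℕ := fun i => ⌊|g i - L|⁻¹⌋₊
  have hν : Tendsto ν U atTop := tendsto_nat_floor_atTop.comp (tendsto_inv_nhdsGT_zero.comp hdist)
  obtain ⟨A, hA, hfin⟩ := (isPPoint_iff_finite_fibers U).1 hP ν hν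
  refine ⟨A.piecewise g fun _ => L, ?_,
    Filter.mem_of_superset hA fun i hi => (Set.piecewise_eq_of_mem _ _ _ hi).symm⟩
  rw [← Nat.cofinite_eq_atTop, Metric.tendsto_nhds]
  intro ε hε
  rw [eventually_cofinite]
  refine (hfin ⌊ε⁻¹⌋₊).subset fun i hi => ?_
  by_cases hiA : i ∈ A
  · have hfar : ε ≤ |g i - L| := by simpa [hiA, Real.dist_eq] using hi
    exact ⟨hiA, Nat.floor_le_floor (inv_anti₀ hε hfar)⟩
  · have : ε ≤ 0 := by simpa [hiA] using hi
    linarith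

theorem isPPoint_of_forall_exists_tendsto_eventuallyEq {U : Ultrafilter ℕ}
    (H : ∀ (g : ℕ → ℝ) (L : ℝ), Tendsto g U (𝓝 L) →
      ∃ h : ℕ → ℝ, Tendsto h atTop (𝓝 L) ∧ g =ᶠ[U] h) :
    IsPPoint U := by
  refine (isPPoint_iff_finite_fibers U).2 fun ν hν => ?_
  set g : ℕ → ℝ := fun i => ((ν i : ℝ) + 1)⁻¹
  have hg : Tendsto g U (𝓝 0) := tendsto_inv_atTop_zero.comp
    (tendsto_atTop_add_const_right _ 1 (tendsto_natCast_atTop_atTop.comp hν))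
  obtain ⟨h, hh, hgh⟩ := H g 0 hg
  refine ⟨{i | g i = h i}, hgh, fun n => ?_⟩
  have hsmall : {i | ((n : ℝ) + 1)⁻¹ ≤ h i}.Finite := by
    have := hh.eventually (gt_mem_nhds (by positivity : (0 : ℝ) < ((n : ℝ) + 1)⁻¹))
    rw [← Nat.cofinite_eq_atTop, eventually_cofinite] at this
    simpa using this
  refine hsmall.subset fun i ⟨hgi, hin⟩ => ?_
  calc ((n : ℝ) + 1)⁻¹ ≤ ((ν i : ℝ) + 1)⁻¹ := by gcongr; exact_mod_cast hin
    _ = h i := hgi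

theorem isPPoint_iff_forall_exists_tendsto_eventuallyEq (U : Ultrafilter ℕ) :
    IsPPoint U ↔ ∀ (g : ℕ → ℝ) (L : ℝ), Tendsto g U (𝓝 L) →
      ∃ h : ℕ → ℝ, Tendsto h atTop (𝓝 L) ∧ g =ᶠ[U] h :=
  ⟨fun hP _ _ hg => hP.exists_tendsto_eventuallyEq hg,
    isPPoint_of_forall_exists_tendsto_eventuallyEq⟩

theorem Filter.Germ.abs_coe_le_const_iff {α : Type*} {U : Ultrafilter α} {f : α → ℝ} {r : ℝ} :
    |(f : (U : Filter α).Germ ℝ)| ≤ ↑r ↔ ∀ᶠ i in U, |f i| ≤ r := by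
  rw [Germ.abs_def, Germ.map_coe]
  exact Germ.coe_le

theorem Filter.Germ.abs_coe_sub_const_lt {α : Type*} {l : Filter α} {U : Ultrafilter α}
    (hUl : (U : Filter α) ≤ l) {f : α → ℝ} {L ε : ℝ} (hf : Tendsto f l (𝓝 L)) (hε : 0 < ε) :
    |(f : (U : Filter α).Germ ℝ) - ↑L| < ↑ε := by
  change |((fun i => f i - L : α → ℝ) : (U : Filter α).Germ ℝ)| < ↑ε
  rw [Germ.abs_def, Germ.map_coe]
  exact Germ.coe_lt.2 (Metric.tendsto_nhds.1 (hf.mono_left hUl) ε hε)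

theorem Ultrafilter.exists_tendsto_of_eventually_abs_le {α : Type*} {U : Ultrafilter α}
    {f : α → ℝ} {r : ℝ} (hf : ∀ᶠ i in U, |f i| ≤ r) : ∃ L, Tendsto f U (𝓝 L) := by
  obtain ⟨L, -, hL⟩ := isCompact_Icc.ultrafilter_le_nhds (U.map f)
    (by rw [Ultrafilter.coe_map]; exact tendsto_principal.2 (hf.mono fun _ => abs_le.1))
  exact ⟨L, hL⟩

theorem coe_mem_D_iff {U : Ultrafilter ℕ} {f : ℕ → ℝ} :
    (f : (U : Filter ℕ).Germ ℝ) ∈ D U ↔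
      ∃ h : ℕ → ℝ, (∃ L, Tendsto h atTop (𝓝 L)) ∧ f =ᶠ[U] h := by
  constructor
  · rintro ⟨h, hh, hfh⟩
    exact ⟨h, cauchySeq_tendsto_of_complete hh, Germ.coe_eq.1 hfh⟩
  · rintro ⟨h, ⟨L, hL⟩, hfh⟩
    exact ⟨h, hL.cauchySeq, Germ.coe_eq.2 hfh⟩

/-- `𝒰` is a P-point iff the natural embedding of `D` into the ultrapower `ℝ^ℕ/𝒰`
is an isomorphism onto the subring of finite hyperreals, the limit map `sh`
corresponding to the standard part (every Cauchy sequence is infinitely close to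
its limit). -/
theorem ppoint_iff_D_is_finite_part (U : Ultrafilter ℕ)
    (hU : ∀ i : ℕ, U ≠ pure i) :
    IsPPoint U ↔
      (((D U : Set ((U : Filter ℕ).Germ ℝ))) =
          {x : (U : Filter ℕ).Germ ℝ | ∃ r : ℝ, |x| ≤ (r : (U : Filter ℕ).Germ ℝ)} ∧
        ∀ (f : ℕ → ℝ) (L : ℝ), CauchySeq f → Tendsto f atTop (nhds L) →
          ∀ ε : ℝ, 0 < ε →
            |(f : (U : Filter ℕ).Germ ℝ) - (L : (U : Filter ℕ).Germ ℝ)| <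
              (ε : (U : Filter ℕ).Germ ℝ)) := by
  have hatTop := U.le_atTop_of_forall_ne_pure hU
  rw [isPPoint_iff_forall_exists_tendsto_eventuallyEq]
  constructor
  · intro hP
    refine ⟨Set.ext fun x => x.inductionOn fun f => ?_,
      fun f L _ hf ε hε => Germ.abs_coe_sub_const_lt hatTop hf hε⟩
    simp only [SetLike.mem_coe, coe_mem_D_iff, Set.mem_ofPred_eq, Germ.abs_coe_le_const_iff]
    constructor
    · rintro ⟨h, ⟨L, hL⟩, hfh⟩
      exact ((hL.mono_left hatTop).congr' hfh.symm).abs.isBoundedUnder_le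
    · rintro ⟨r, hr⟩
      obtain ⟨L, hL⟩ := Ultrafilter.exists_tendsto_of_eventually_abs_le hr
      obtain ⟨h, hh, hfh⟩ := hP f L hL
      exact ⟨h, ⟨L, hh⟩, hfh⟩
  · rintro ⟨hfinite, -⟩ g L hg
    have hgD : (g : (U : Filter ℕ).Germ ℝ) ∈ D U := by
      rw [← SetLike.mem_coe, hfinite]
      obtain ⟨r, hr⟩ := hg.abs.isBoundedUnder_le
      exact ⟨r, Germ.abs_coe_le_const_iff.2 hr⟩
    obtain ⟨h, ⟨L', hh⟩, hgh⟩ := coe_mem_D_iff.1 hgD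
    obtain rfl : L' = L := tendsto_nhds_unique ((hh.mono_left hatTop).congr' hgh.symm) hg
    exact ⟨h, hh, hgh⟩
end

section
/- If 𝒰 is a P-point ultrafilter on ℕ, then every hyperreal in ℝ^ℕ/𝒰 is either the class of a Cauchy sequence or the inverse of a nonzero infinitesimal; i.e., ℝ^ℕ/𝒰 is the disjoint union of the finite part D and the set I⁻¹ of inverses of nonzero infinitesimals. -/
open Filter

/-- The ideal of infinitesimals of the ultrapower. -/
def Infinitesimal (U : Ultrafilter ℕ) (x : (U : Filter ℕ).Germ ℝ) : Prop :=
  ∀ r : ℝ, 0 < r → |x| < (r : (U : Filter ℕ).Germ ℝ)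

/-- `I⁻¹`: the set of inverses of nonzero infinitesimals. -/
def InvInf (U : Ultrafilter ℕ) : Set ((U : Filter ℕ).Germ ℝ) :=
  {x | ∃ y : (U : Filter ℕ).Germ ℝ, y ≠ 0 ∧ Infinitesimal U y ∧ x = y⁻¹}

/-- A germ bounded in absolute value by a standard real has a "standard part" `L`:
a real number such that the representing sequence is `𝒰`-often within `ε` of `L`. -/
private lemma key_aux (U : Ultrafilter ℕ) (f : ℕ → ℝ) (M : ℝ)
    (hM : |(f : (U : Filter ℕ).Germ ℝ)| ≤ ((M : ℝ) : (U : Filter ℕ).Germ ℝ)) :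
    ∃ L : ℝ, ∀ ε : ℝ, 0 < ε → ∀ᶠ i in (U : Filter ℕ), |f i - L| < ε := by
  obtain ⟨h1, h2⟩ := abs_le.1 hM
  set G := (U : Filter ℕ).Germ ℝ
  set x : G := (f : G) with hx
  set S : Set ℝ := {r : ℝ | ((r : ℝ) : G) ≤ x} with hS
  have hne : (-M) ∈ S := by
    show (((-M : ℝ)) : G) ≤ x
    rw [Filter.Germ.const_neg]; exact h1
  have hbdd : BddAbove S := ⟨M, fun r hr => Filter.Germ.const_le_iff.1 (le_trans hr h2)⟩
  set L := sSup S with hL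
  refine ⟨L, fun ε hε => ?_⟩
  have hup : x < ((L + ε : ℝ) : G) := by
    by_contra hcon
    have hmem : L + ε ∈ S := le_of_not_gt hcon
    have := le_csSup hbdd hmem
    linarith
  have hlo : ((L - ε : ℝ) : G) < x := by
    obtain ⟨r, hrS, hr⟩ := exists_lt_of_lt_csSup ⟨-M, hne⟩ (by linarith : L - ε < L)
    exact lt_of_lt_of_le (Filter.Germ.const_lt hr) hrS
  have e1 : ∀ᶠ i in (U : Filter ℕ), f i < L + ε := Filter.Germ.coe_lt.1 hup
  have e2 : ∀ᶠ i in (U : Filter ℕ), L - ε < f i := Filter.Germ.coe_lt.1 hlo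
  filter_upwards [e1, e2] with i hi1 hi2
  rw [abs_lt]; constructor <;> linarith

/-- The P-point property turns a germ with a standard part into the germ of a
Cauchy (indeed convergent) sequence. -/
private lemma finite_mem_D (U : Ultrafilter ℕ) (hP : IsPPoint U) (f : ℕ → ℝ) (L : ℝ)
    (key : ∀ ε : ℝ, 0 < ε → ∀ᶠ i in (U : Filter ℕ), |f i - L| < ε) :
    ∃ g : ℕ → ℝ, CauchySeq g ∧ (f : (U : Filter ℕ).Germ ℝ) = (g : (U : Filter ℕ).Germ ℝ) := by
  classical
  by_cases hZ : {i | f i = L} ∈ U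
  · exact ⟨fun _ => L, cauchySeq_const L,
      Filter.Germ.coe_eq.2 (Filter.Eventually.mono hZ fun i hi => hi)⟩
  · set c : ℕ → Set ℕ := fun n =>
      match n with
      | 0 => {i | f i = L} ∪ {i | 1 ≤ |f i - L|}
      | m + 1 => {i | ((m : ℝ) + 2)⁻¹ ≤ |f i - L| ∧ |f i - L| < ((m : ℝ) + 1)⁻¹} with hc
    have hdisj' : ∀ m n : ℕ, m < n → Disjoint (c m) (c n) := by
      intro m n hmn
      rw [Set.disjoint_left]
      intro i him hin
      match m, n with
      | 0, k + 1 =>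
        obtain ⟨hlo, hhi⟩ := hin
        have hk2 : (0:ℝ) < ((k:ℝ)+2)⁻¹ := by positivity
        have hk1 : ((k:ℝ)+1)⁻¹ ≤ 1 := by
          rw [inv_le_one_iff₀]; right; linarith [Nat.cast_nonneg (α := ℝ) k]
        rcases him with hi | hi
        · have h0 : |f i - L| = 0 := by rw [Set.mem_setOf_eq] at hi; rw [hi]; simp
          linarith
        · have : (1:ℝ) ≤ |f i - L| := hi
          linarith
      | j + 1, k + 1 =>
        obtain ⟨hlo1, hhi1⟩ := him
        obtain ⟨hlo2, hhi2⟩ := hin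
        have hjk : j < k := by omega
        have hcast : (j:ℝ) + 2 ≤ (k:ℝ) + 1 := by
          have : (j:ℝ) + 1 ≤ (k:ℝ) := by exact_mod_cast hjk
          linarith
        have : ((k:ℝ)+1)⁻¹ ≤ ((j:ℝ)+2)⁻¹ := by
          apply inv_anti₀ (by positivity) hcast
        linarith
    have hdisj : Pairwise (Function.onFun Disjoint c) :=
      fun m n hmn => hmn.lt_or_gt.elim (hdisj' m n) fun h => (hdisj' n m h).symm
    have huniv : (⋃ n, c n) = Set.univ := by
      rw [Set.eq_univ_iff_forall]
      intro i
      rw [Set.mem_iUnion]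
      by_cases hiL : f i = L
      · exact ⟨0, Or.inl hiL⟩
      have ht : 0 < |f i - L| := abs_pos.2 (sub_ne_zero.2 hiL)
      by_cases h1 : 1 ≤ |f i - L|
      · exact ⟨0, Or.inr h1⟩
      push_neg at h1
      have hex : ∃ n : ℕ, ((n : ℝ) + 2)⁻¹ ≤ |f i - L| := by
        obtain ⟨n, hn⟩ := exists_nat_one_div_lt ht
        refine ⟨n, le_trans ?_ hn.le⟩
        rw [one_div]
        apply inv_anti₀ (by positivity) (by linarith)
      refine ⟨Nat.find hex + 1, Nat.find_spec hex, ?_⟩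
      match hm : Nat.find hex with
      | 0 => simpa using h1
      | m + 1 =>
        have hmin : ¬ ((m : ℝ) + 2)⁻¹ ≤ |f i - L| := Nat.find_min hex (by omega)
        push_neg at hmin
        have : ((m:ℝ) + 1 + 1) = (m:ℝ) + 2 := by ring
        push_cast
        rw [this]
        exact hmin
    have hnot : ∀ n, c n ∉ U := by
      intro n
      match n with
      | 0 =>
        intro h
        rcases Ultrafilter.union_mem_iff.1 h with h | h
        · exact hZ h
        · have hTc : {i | 1 ≤ |f i - L|} = {i | |f i - L| < 1}ᶜ := by
            ext i; simp [not_lt]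
          rw [hTc] at h
          exact Filter.compl_notMem (key 1 one_pos) h
      | m + 1 =>
        intro h
        have hsub : c (m+1) ⊆ {i | |f i - L| < ((m:ℝ)+2)⁻¹}ᶜ := fun i hi => not_lt.2 hi.1
        exact Filter.compl_notMem (key _ (by positivity)) (Filter.mem_of_superset h hsub)
    obtain ⟨A, hA, hfin⟩ := hP c hdisj huniv hnot
    set h : ℕ → ℝ := fun i => if i ∈ A then f i - L else 0 with hh
    have htend : Tendsto h atTop (nhds 0) := by
      rw [← Nat.cofinite_eq_atTop, Metric.tendsto_nhds]
      intro ε hε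
      rw [Filter.eventually_cofinite]
      obtain ⟨N, hN⟩ := exists_nat_one_div_lt hε
      apply Set.Finite.subset
        (Set.Finite.biUnion (Finset.range (N+1)).finite_toSet (fun n _ => hfin n))
      intro i hi
      simp only [Set.mem_setOf_eq, not_lt, Real.dist_eq, sub_zero] at hi
      have hiA : i ∈ A := by
        by_contra hiA
        rw [hh] at hi
        simp only [if_neg hiA, abs_zero] at hi
        linarith
      have hgi : ε ≤ |f i - L| := by
        rw [hh] at hi; simpa [if_pos hiA] using hi
      have : i ∈ ⋃ n, c n := huniv ▸ Set.mem_univ i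
      obtain ⟨n, hn⟩ := Set.mem_iUnion.1 this
      have hnN : n < N + 1 := by
        match n with
        | 0 => omega
        | m + 1 =>
          have hhi : |f i - L| < ((m:ℝ)+1)⁻¹ := hn.2
          have h1 : ((N:ℝ)+1)⁻¹ < ((m:ℝ)+1)⁻¹ := by
            have : ((N:ℝ)+1)⁻¹ < ε := by rwa [one_div] at hN
            linarith
          have : (m:ℝ) + 1 < (N:ℝ) + 1 := by
            have hm1 : (0:ℝ) < (m:ℝ)+1 := by positivity
            have hN1 : (0:ℝ) < (N:ℝ)+1 := by positivity
            exact (inv_lt_inv₀ hN1 hm1).1 h1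
          have : (m:ℝ) < (N:ℝ) := by linarith
          have : m < N := by exact_mod_cast this
          omega
      simp only [Set.mem_iUnion, Finset.coe_range, Set.mem_Iio]
      exact ⟨n, hnN, hiA, hn⟩
    refine ⟨fun i => L + h i, ?_, ?_⟩
    · have : Tendsto (fun i => L + h i) atTop (nhds (L + 0)) := tendsto_const_nhds.add htend
      exact this.cauchySeq
    · apply Filter.Germ.coe_eq.2
      filter_upwards [hA] with i hiA
      simp [hh, if_pos hiA]

/-- `D` and `I⁻¹` are disjoint. -/
private lemma not_D_and_invInf (U : Ultrafilter ℕ) (x : (U : Filter ℕ).Germ ℝ)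
    (hD : x ∈ (D U : Set ((U : Filter ℕ).Germ ℝ))) (hI : x ∈ InvInf U) : False := by
  obtain ⟨g, hg, rfl⟩ := hD
  obtain ⟨y, hy0, hyinf, hxy⟩ := hI
  obtain ⟨R, hR0, hRb⟩ := cauchySeq_bdd hg
  set M : ℝ := |g 0| + R with hM
  have hMnn : 0 ≤ M := by positivity
  have hgb : ∀ i, |g i| ≤ M := by
    intro i
    have := hRb i 0
    rw [Real.dist_eq] at this
    calc |g i| ≤ |g i - g 0| + |g 0| := by
          have := abs_sub_abs_le_abs_sub (g i) (g 0); linarith [abs_abs (g i)]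
      _ ≤ M := by rw [hM]; linarith
  have hxle : |(g : (U : Filter ℕ).Germ ℝ)| ≤ ((M : ℝ) : (U : Filter ℕ).Germ ℝ) := by
    have habs : |(g : (U : Filter ℕ).Germ ℝ)|
        = ((fun i => |g i| : ℕ → ℝ) : (U : Filter ℕ).Germ ℝ) := rfl
    rw [habs]
    exact Filter.Germ.coe_le.2 (Filter.Eventually.of_forall hgb)
  have hy1 : |y| < (((M + 1)⁻¹ : ℝ) : (U : Filter ℕ).Germ ℝ) := hyinf _ (by positivity)
  rw [Filter.Germ.const_inv] at hy1
  have hypos : 0 < |y| := abs_pos.2 hy0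
  have h2 : (((M + 1 : ℝ)) : (U : Filter ℕ).Germ ℝ) < |y|⁻¹ := by
    have := inv_strictAnti₀ hypos hy1
    rwa [inv_inv] at this
  rw [← abs_inv, ← hxy] at h2
  have := lt_of_lt_of_le h2 hxle
  have := Filter.Germ.const_lt_iff.1 this
  linarith

/-- If `𝒰` is a P-point, the hyperreal field decomposes as the disjoint union
`D ⊔ I⁻¹` of the Cauchy (finite) part and the inverses of nonzero infinitesimals. -/
theorem ultrapower_eq_D_union_inv_infinitesimals (U : Ultrafilter ℕ)
    (hU : ∀ i : ℕ, U ≠ pure i) (hP : IsPPoint U) :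
    ∀ x : (U : Filter ℕ).Germ ℝ,
      (x ∈ (D U : Set ((U : Filter ℕ).Germ ℝ)) ∨ x ∈ InvInf U) ∧
      ¬(x ∈ (D U : Set ((U : Filter ℕ).Germ ℝ)) ∧ x ∈ InvInf U) := by
  intro x
  refine ⟨?_, fun ⟨hD, hI⟩ => not_D_and_invInf U x hD hI⟩
  by_cases hfin : ∃ M : ℝ, |x| ≤ ((M : ℝ) : (U : Filter ℕ).Germ ℝ)
  · left
    obtain ⟨M, hM⟩ := hfin
    revert hM
    refine Filter.Germ.inductionOn x fun f => ?_
    intro hM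
    obtain ⟨L, key⟩ := key_aux U f M hM
    obtain ⟨g, hg, heq⟩ := finite_mem_D U hP f L key
    exact ⟨g, hg, heq⟩
  · right
    push_neg at hfin
    have hbig : ∀ M : ℝ, ((M : ℝ) : (U : Filter ℕ).Germ ℝ) < |x| := hfin
    have hx0 : x ≠ 0 := by
      intro h
      have := hbig 0
      rw [h, abs_zero] at this
      rw [show (((0:ℝ)) : (U : Filter ℕ).Germ ℝ) = 0 from rfl] at this
      exact lt_irrefl 0 this
    refine ⟨x⁻¹, inv_ne_zero hx0, ?_, (inv_inv x).symm⟩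
    intro r hr
    have h2 : (((r⁻¹ : ℝ)) : (U : Filter ℕ).Germ ℝ) < |x| := hbig r⁻¹
    rw [Filter.Germ.const_inv] at h2
    have hrpos : (0 : (U : Filter ℕ).Germ ℝ) < ((r : ℝ) : (U : Filter ℕ).Germ ℝ) := by
      have h := Filter.Germ.const_lt (φ := U) (β := ℝ) hr
      rwa [show (((0:ℝ)) : (U : Filter ℕ).Germ ℝ) = 0 from rfl] at h
    have := inv_strictAnti₀ (inv_pos.2 hrpos) h2
    rwa [inv_inv, ← abs_inv] at this
end

section
/- In the ultrapower ℝ^ℕ/𝒰 (𝒰 a P-point), every element of I⁻¹ (inverse of a nonzero infinitesimal) is represented by a sequence tending to infinity in absolute value. -/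
open Filter

/-- If `𝒰` is a P-point, every inverse of a nonzero infinitesimal in the ultrapower
is represented by a sequence tending to infinity in absolute value. -/
theorem inv_infinitesimal_represented_by_unbounded (U : Ultrafilter ℕ)
    (hU : ∀ i : ℕ, U ≠ pure i) (hP : IsPPoint U) :
    ∀ x : (U : Filter ℕ).Germ ℝ,
      (∃ y : (U : Filter ℕ).Germ ℝ, y ≠ 0 ∧ Infinitesimal U y ∧ x = y⁻¹) →
      ∃ f : ℕ → ℝ, x = (f : (U : Filter ℕ).Germ ℝ) ∧
        Tendsto (fun i => |f i|) atTop atTop := by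
  rintro x ⟨y, hy0, hyi, rfl⟩
  have habs : (0 : (U : Filter ℕ).Germ ℝ) < |y| := abs_pos.mpr hy0
  -- x = y⁻¹ is infinite
  have hinf : ∀ r : ℝ, ((r : ℝ) : (U : Filter ℕ).Germ ℝ) < |y⁻¹| := by
    intro r
    rw [abs_inv]
    have hr1 : (0:ℝ) < |r| + 1 := by positivity
    have h1 : |y| < (((|r| + 1)⁻¹ : ℝ) : (U : Filter ℕ).Germ ℝ) := hyi _ (by positivity)
    have h2 : ((((|r| + 1)⁻¹ : ℝ) : (U : Filter ℕ).Germ ℝ))⁻¹ < |y|⁻¹ :=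
      inv_strictAnti₀ habs h1
    rw [← Filter.Germ.const_inv, inv_inv] at h2
    refine lt_trans ?_ h2
    exact Filter.Germ.const_lt (lt_of_le_of_lt (le_abs_self r) (lt_add_one _))
  obtain ⟨g, hgcoe⟩ : ∃ g : ℕ → ℝ, (↑g : (U : Filter ℕ).Germ ℝ) = y⁻¹ :=
    Quotient.exists_rep _
  -- sets where |g| is large are in U
  have hS : ∀ n : ℕ, ∀ᶠ i in (U : Filter ℕ), (n : ℝ) < |g i| := by
    intro n
    have := hinf n
    rw [← hgcoe, Filter.Germ.abs_def] at this
    exact Filter.Germ.coe_lt.mp this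
  set c : ℕ → Set ℕ := fun n => {i | (n : ℝ) ≤ |g i| ∧ |g i| < n + 1} with hc
  have hdisj : Pairwise (Function.onFun Disjoint c) := by
    intro m n hmn
    refine Set.disjoint_left.mpr ?_
    rintro i ⟨hm1, hm2⟩ ⟨hn1, hn2⟩
    rcases lt_or_gt_of_ne hmn with h | h
    · have : (m : ℝ) + 1 ≤ n := by exact_mod_cast h
      linarith
    · have : (n : ℝ) + 1 ≤ m := by exact_mod_cast h
      linarith
  have hcover : (⋃ n, c n) = Set.univ := by
    ext i
    simp only [Set.mem_iUnion, Set.mem_univ, iff_true]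
    refine ⟨⌊|g i|⌋₊, Nat.floor_le (abs_nonneg _), Nat.lt_floor_add_one _⟩
  have hnotU : ∀ n, c n ∉ U := by
    intro n hn
    have h1 := hS (n + 1)
    have h2 : ∀ᶠ i in (U : Filter ℕ), i ∈ c n := hn
    have := (h1.and h2).exists
    obtain ⟨i, hi1, _, hi3⟩ := this
    push_cast at hi1
    linarith
  obtain ⟨A, hA, hAfin⟩ := hP c hdisj hcover hnotU
  classical
  refine ⟨fun i => if i ∈ A then g i else i, ?_, ?_⟩
  · rw [← hgcoe]
    refine (Filter.Germ.coe_eq.mpr ?_).symm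
    filter_upwards [hA] with i hi
    simp [hi]
  · rw [tendsto_atTop]
    intro b
    rw [← Nat.cofinite_eq_atTop, eventually_cofinite]
    have hfin : ({i | |(if i ∈ A then g i else (i:ℝ))| < b}).Finite := by
      have hsub : {i | |(if i ∈ A then g i else (i:ℝ))| < b} ⊆
          (⋃ n ∈ Finset.range ⌈b⌉₊, A ∩ c n) ∪ {i : ℕ | (i : ℝ) < b} := by
        intro i hi
        by_cases hiA : i ∈ A
        · left
          simp only [Set.mem_setOf_eq, if_pos hiA] at hi
          simp only [Set.mem_iUnion]
          refine ⟨⌊|g i|⌋₊, ?_, hiA, Nat.floor_le (abs_nonneg _), Nat.lt_floor_add_one _⟩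
          simp only [Finset.mem_range]
          have : |g i| < (⌈b⌉₊ : ℝ) := lt_of_lt_of_le hi (Nat.le_ceil _)
          exact (Nat.floor_lt (abs_nonneg _)).mpr this
        · right
          simp only [Set.mem_setOf_eq, if_neg hiA, abs_of_nonneg (by positivity : (0:ℝ) ≤ (i:ℝ))] at hi
          exact hi
      refine Set.Finite.subset (Set.Finite.union ?_ ?_) hsub
      · exact Set.Finite.biUnion (Finset.range ⌈b⌉₊).finite_toSet fun n _ => hAfin n
      · have : {i : ℕ | (i : ℝ) < b} ⊆ Set.Iio ⌈b⌉₊ := by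
          intro i hi
          simp only [Set.mem_setOf_eq] at hi
          simp only [Set.mem_Iio]
          exact_mod_cast Nat.lt_ceil.mpr (by exact_mod_cast hi)
        exact (Set.finite_Iio _).subset this
    refine hfin.subset ?_
    intro i hi
    simp only [Set.mem_setOf_eq, not_le] at hi ⊢
    exact hi
end

section
/- Let 𝒰 be a nonprincipal ultrafilter that is not a P-point. Then the natural monomorphism from D (Cauchy sequences modulo 𝒰-equivalence) into ℝ^ℕ/𝒰 is not surjective onto the finite hyperreals: there exists a bounded sequence not 𝒰-equivalent to any Cauchy sequence. -/
open Filter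

/-- If `𝒰` is not a P-point, then `D` is not all of the finite part of the ultrapower:
some bounded sequence is not `𝒰`-equivalent to any Cauchy sequence. -/
theorem not_ppoint_D_not_onto_finite (U : Ultrafilter ℕ)
    (hU : ∀ i : ℕ, U ≠ pure i) (hP : ¬ IsPPoint U) :
    ∃ f : ℕ → ℝ, (∃ r : ℝ, ∀ i, |f i| ≤ r) ∧
      ∀ g : ℕ → ℝ, CauchySeq g → {i : ℕ | f i = g i} ∉ U := by
  rw [IsPPoint] at hP
  push_neg at hP
  obtain ⟨c, hdisj, hcov, hnotU, hbad⟩ := hP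
  have hex : ∀ i : ℕ, ∃ n, i ∈ c n := fun i =>
    Set.mem_iUnion.mp (hcov ▸ Set.mem_univ i)
  choose idx hidx using hex
  have hidx_eq : ∀ i n, i ∈ c n → idx i = n := by
    intro i n hi
    by_contra h
    exact Set.disjoint_left.mp (hdisj h) (hidx i) hi
  refine ⟨fun i => 1 / ((idx i : ℝ) + 1), ⟨1, fun i => ?_⟩, ?_⟩
  · rw [abs_of_nonneg (by positivity), div_le_one (by positivity)]
    linarith [Nat.cast_nonneg (α := ℝ) (idx i)]
  intro g hg hA
  set A := {i : ℕ | (fun i => 1 / ((idx i : ℝ) + 1)) i = g i} with hAdef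
  obtain ⟨n₀, hinf⟩ := hbad A hA
  obtain ⟨L, hL⟩ := cauchySeq_tendsto_of_complete hg
  have hval : ∀ i ∈ A ∩ c n₀, g i = 1 / ((n₀ : ℝ) + 1) := by
    rintro i ⟨hiA, hic⟩
    have h1 : (1 : ℝ) / ((idx i : ℝ) + 1) = g i := hiA
    rw [← h1, hidx_eq i n₀ hic]
  have hLe : L = 1 / ((n₀ : ℝ) + 1) := by
    by_contra h
    have hε : 0 < |1 / ((n₀ : ℝ) + 1) - L| :=
      abs_pos.mpr (sub_ne_zero.mpr (Ne.symm h))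
    rw [Metric.tendsto_atTop] at hL
    obtain ⟨M, hM⟩ := hL _ hε
    obtain ⟨i, hi, hMi⟩ := (show (A ∩ c n₀).Infinite from hinf).exists_gt M
    have h2 := hM i hMi.le
    rw [Real.dist_eq, hval i hi] at h2
    exact lt_irrefl _ h2
  have hLpos : 0 < L := hLe ▸ by positivity
  rw [Metric.tendsto_atTop] at hL
  obtain ⟨M, hM⟩ := hL (L / 2) (by linarith)
  set K := 2 * n₀ + 2 with hK
  set S := {i : ℕ | i < M} ∪ ⋃ n ∈ Finset.range K, c n with hS
  have hsub : A ⊆ S := by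
    intro i hiA
    by_cases hiM : i < M
    · exact Or.inl hiM
    · right
      have h1 : |g i - L| < L / 2 := by
        simpa [Real.dist_eq] using hM i (not_lt.mp hiM)
      have h2 : L / 2 < g i := by
        have := abs_lt.mp h1
        linarith [this.1]
      have h3 : L / 2 < (1 : ℝ) / ((idx i : ℝ) + 1) := by
        have h1' : (1 : ℝ) / ((idx i : ℝ) + 1) = g i := hiA
        rw [h1']; exact h2
      rw [hLe] at h3
      have h4 : ((idx i : ℝ) + 1) < 2 * ((n₀ : ℝ) + 1) := by
        rw [div_div, div_lt_div_iff₀ (by positivity) (by positivity)] at h3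
        linarith
      have h5 : (idx i : ℝ) < (K : ℝ) := by
        push_cast [hK]; linarith
      have h6 : idx i < K := by exact_mod_cast h5
      exact Set.mem_biUnion (Finset.mem_range.mpr h6) (hidx i)
  have hcompl : Sᶜ ∈ U := by
    rw [hS, Set.compl_union, Set.compl_iUnion₂]
    refine Filter.inter_mem ?_ ?_
    · refine Ultrafilter.compl_mem_iff_notMem.mpr fun hmem => ?_
      obtain ⟨x, -, hx⟩ :=
        Ultrafilter.eq_pure_of_finite_mem (Set.finite_Iio M) hmem
      exact hU x hx
    · rw [Filter.biInter_finset_mem]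
      intro n _
      exact Ultrafilter.compl_mem_iff_notMem.mpr (hnotU n)
  have hmem : A ∩ Sᶜ ∈ U := Filter.inter_mem hA hcompl
  have hempty : A ∩ Sᶜ = ∅ := by
    rw [Set.eq_empty_iff_forall_notMem]
    rintro i ⟨h1, h2⟩
    exact h2 (hsub h1)
  rw [hempty] at hmem
  exact Filter.empty_notMem (U : Filter ℕ) hmem
end

section
/- Let 𝒰 be a nonprincipal ultrafilter on ℕ, (Xₙ) a decreasing chain of sets in 𝒰 with X₁ = ℕ, and define f(i) = 1/n for i ∈ Xₙ \ Xₙ₊₁ (and f(i) = 0 for i ∈ ⋂ₙ Xₙ). If Y ⊆ ℕ is such that f restricted to Y is Cauchy and Y ∩ (Xₙ \ Xₙ₊₁) is infinite for some n, then Y ∩ Xₙ₊₂ is finite. -/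
open Filter

lemma chain_anti (X : ℕ → Set ℕ) (hdec : ∀ n, X (n + 1) ⊆ X n) :
    ∀ a b : ℕ, a ≤ b → X b ⊆ X a := by
  intro a b hab
  induction b with
  | zero => simp_all
  | succ k ih =>
    rcases Nat.lt_or_ge a (k+1) with h | h
    · exact (hdec k).trans (ih (Nat.lt_succ_iff.mp h))
    · have : a = k + 1 := le_antisymm hab h
      subst this; exact subset_rfl

/-- Key combinatorial step: for a decreasing chain `(Xₙ)` in `𝒰` with `X₀ = ℕ` and
the sequence `f(i) = 1/(n+1)` for `i ∈ Xₙ \ Xₙ₊₁` (and `f = 0` on `⋂ₙ Xₙ`), if `f`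
is Cauchy on `Y` and `Y ∩ (Xₙ \ Xₙ₊₁)` is infinite for some `n`, then `Y ∩ Xₙ₊₂`
is finite. -/
theorem cauchyOn_chain_combinatorial_step (U : Ultrafilter ℕ)
    (X : ℕ → Set ℕ) (hXU : ∀ n, X n ∈ U) (hdec : ∀ n, X (n + 1) ⊆ X n)
    (hX0 : X 0 = Set.univ)
    (f : ℕ → ℝ)
    (hf : ∀ n : ℕ, ∀ i ∈ X n \ X (n + 1), f i = 1 / ((n : ℝ) + 1))
    (hf0 : ∀ i ∈ ⋂ n, X n, f i = 0)
    (Y : Set ℕ) (hY : CauchyOn f Y)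
    (n : ℕ) (hinf : (Y ∩ (X n \ X (n + 1))).Infinite) :
    (Y ∩ X (n + 2)).Finite := by
  set ε : ℝ := 1 / ((n : ℝ) + 1) - 1 / ((n : ℝ) + 2) with hε
  have hn1 : (0:ℝ) < (n : ℝ) + 1 := by positivity
  have hn2 : (0:ℝ) < (n : ℝ) + 2 := by positivity
  have hεpos : 0 < ε := by
    rw [hε, sub_pos]
    exact one_div_lt_one_div_of_lt hn1 (by linarith)
  obtain ⟨N, hN⟩ := hY ε hεpos
  obtain ⟨i, hi, hiN⟩ := hinf.exists_gt N
  have hfi : f i = 1 / ((n : ℝ) + 1) := hf n i hi.2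
  apply Set.Finite.subset (Set.finite_Iio N)
  intro j hj
  by_contra hjN
  have hjN' : N ≤ j := le_of_not_gt hjN
  -- compute a bound on f j : either 0 or 1/(m+1) with m ≥ n+2
  have hfj : f j ≤ 1 / ((n : ℝ) + 3) := by
    by_cases hjI : j ∈ ⋂ k, X k
    · rw [hf0 j hjI]; positivity
    · have hex : ∃ m, j ∉ X m := by
        simpa [Set.mem_iInter] using hjI
      classical
      set m := Nat.find hex with hm
      have hmspec : j ∉ X m := Nat.find_spec hex
      have hm0 : m ≠ 0 := by
        intro h0
        apply hmspec
        rw [h0, hX0]; trivial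
      obtain ⟨k, hk⟩ := Nat.exists_eq_succ_of_ne_zero hm0
      have hjk : j ∈ X k := by
        by_contra h
        exact Nat.find_min hex (by omega : k < m) h
      have hjk1 : j ∉ X (k + 1) := by rw [hk] at hmspec; exact hmspec
      have hfjval : f j = 1 / ((k : ℝ) + 1) := hf k j ⟨hjk, hjk1⟩
      have hkn : n + 2 ≤ k := by
        by_contra h
        push_neg at h
        exact (hjk1) (chain_anti X hdec (k+1) (n+2) (by omega) hj.2)
      rw [hfjval]
      apply one_div_le_one_div_of_le (by positivity)
      have : ((n:ℝ) + 2) ≤ (k : ℝ) := by exact_mod_cast hkn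
      linarith
  have hfj0 : 0 ≤ f j := by
    by_cases hjI : j ∈ ⋂ k, X k
    · rw [hf0 j hjI]
    · have hex : ∃ m, j ∉ X m := by simpa [Set.mem_iInter] using hjI
      classical
      set m := Nat.find hex with hm
      have hmspec : j ∉ X m := Nat.find_spec hex
      have hm0 : m ≠ 0 := fun h0 => hmspec (by rw [h0, hX0]; trivial)
      obtain ⟨k, hk⟩ := Nat.exists_eq_succ_of_ne_zero hm0
      have hjk : j ∈ X k := by
        by_contra h
        exact Nat.find_min hex (by omega : k < m) h
      have hjk1 : j ∉ X (k + 1) := by rw [hk] at hmspec; exact hmspec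
      rw [hf k j ⟨hjk, hjk1⟩]; positivity
  have hlt := hN i hi.1 j hj.1 (le_of_lt hiN) hjN'
  have h13 : 1 / ((n:ℝ) + 3) < 1 / ((n:ℝ) + 2) :=
    one_div_lt_one_div_of_lt hn2 (by linarith)
  have h12 : 1 / ((n:ℝ) + 2) < 1 / ((n:ℝ) + 1) :=
    one_div_lt_one_div_of_lt hn1 (by linarith)
  have : |f i - f j| ≥ ε := by
    rw [hfi, hε, abs_of_nonneg (by linarith)]
    linarith
  linarith
end
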